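/- Let H be a real Hilbert space, g : H → ℝ ∪ {∞} convex proper lsc, and let 0 < α ≤ β. Then for every x ∈ H, ‖prox_{αg}(x) − prox_{βg}(x)‖ ≤ |α − β| · ‖(x − prox_{βg}(x))/β‖. -/

import Mathlib

/-!
Both prox points satisfy the subgradient inequality of convex analysis: `(x - p) / α ∈ ∂g(p)`
and `(x - q) / β ∈ ∂g(q)`, obtained by comparing `p` with the points of the segment towards
another point and letting the step go to zero. Adding the two inequalities (monotonicity of `∂g`)
and writing `x - p = (x - q) - (p - q)` gives `β ‖p - q‖² ≤ (β - α) ⟪x - q, p - q⟫`, and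
Cauchy–Schwarz finishes.
-/

open Filter Topology
open scoped RealInnerProductSpace

section

variable {H : Type*} [NormedAddCommGroup H]

lemma le_of_forall_le_add_mul {a b D : ℝ} (h : ∀ t : ℝ, 0 < t → t ≤ 1 → a ≤ b + t * D) :
    a ≤ b := by
  have hlim : Tendsto (fun t : ℝ => b + t * D) (𝓝[>] 0) (𝓝 b) :=
    ((continuous_const.add (continuous_id.mul continuous_const)).tendsto' 0 b
      (by simp)).mono_left nhdsWithin_le_nhds
  refine ge_of_tendsto hlim ?_
  filter_upwards [Ioc_mem_nhdsGT zero_lt_one] with t ht using h t ht.1 ht.2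

/-- `p` minimizes `u ↦ g u + ‖u - x‖² / (2γ)`, i.e. `p = prox_{γg}(x)`. -/
def IsProxMinimizer (g : H → EReal) (γ : ℝ) (x p : H) : Prop :=
  ∀ u : H, g p + ((1 / (2 * γ) * ‖p - x‖ ^ 2 : ℝ) : EReal)
    ≤ g u + ((1 / (2 * γ) * ‖u - x‖ ^ 2 : ℝ) : EReal)

namespace IsProxMinimizer

variable {g : H → EReal} {γ : ℝ} {x p : H}

lemma ne_top (hp : IsProxMinimizer g γ x p) (hdom : ∃ y, g y ≠ ⊤) : g p ≠ ⊤ := by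
  obtain ⟨y, hy⟩ := hdom
  intro htop
  have h := hp y
  rw [htop, EReal.top_add_of_ne_bot (EReal.coe_ne_bot _), top_le_iff] at h
  exact (EReal.add_lt_top hy (EReal.coe_ne_top _)).ne h

lemma exists_eq_coe (hp : IsProxMinimizer g γ x p) (hdom : ∃ y, g y ≠ ⊤) (hbot : g p ≠ ⊥) :
    ∃ a : ℝ, g p = a :=
  ⟨(g p).toReal, (EReal.coe_toReal (hp.ne_top hdom) hbot).symm⟩

end IsProxMinimizer

variable [InnerProductSpace ℝ H]

lemma mul_norm_sub_le_of_inner_nonneg {α β : ℝ} (hα : 0 < α) (hαβ : α ≤ β) {x p q : H}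
    (h : 0 ≤ ⟪x - p, p - q⟫ / α + ⟪x - q, q - p⟫ / β) :
    β * ‖p - q‖ ≤ (β - α) * ‖x - q‖ := by
  have hβ : 0 < β := hα.trans_le hαβ
  have hsplit : ⟪x - p, p - q⟫ = ⟪x - q, p - q⟫ - ‖p - q‖ ^ 2 := by
    rw [show x - p = (x - q) - (p - q) by abel, inner_sub_left, real_inner_self_eq_norm_sq]
  have hswap : ⟪x - q, q - p⟫ = -⟪x - q, p - q⟫ := by
    rw [← inner_neg_right, neg_sub]
  rw [hsplit, hswap] at h
  have hsq : β * ‖p - q‖ ^ 2 ≤ (β - α) * ⟪x - q, p - q⟫ := by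
    field_simp at h
    linarith
  have hcs : (β - α) * ⟪x - q, p - q⟫ ≤ (β - α) * (‖x - q‖ * ‖p - q‖) :=
    mul_le_mul_of_nonneg_left (real_inner_le_norm _ _) (by linarith)
  rcases (norm_nonneg (p - q)).eq_or_lt with h0 | hpos
  · rw [← h0, mul_zero]
    exact mul_nonneg (by linarith) (norm_nonneg _)
  · nlinarith

namespace IsProxMinimizer

variable {g : H → EReal} {γ : ℝ} {x p : H}

lemma le_segment
    (hconv : ∀ x y : H, ∀ t : ℝ, 0 ≤ t → t ≤ 1 →
      g (t • x + (1 - t) • y) ≤ (t : ℝ) * g x + ((1 - t : ℝ) : EReal) * g y)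
    (hp : IsProxMinimizer g γ x p) {u : H} {a b : ℝ} (ha : g p = a) (hb : g u = b)
    {t : ℝ} (ht₀ : 0 ≤ t) (ht₁ : t ≤ 1) :
    a + 1 / (2 * γ) * ‖p - x‖ ^ 2
      ≤ t * b + (1 - t) * a + 1 / (2 * γ) * ‖t • u + (1 - t) • p - x‖ ^ 2 := by
  have hseg := hconv u p t ht₀ ht₁
  rw [ha, hb] at hseg
  have h := (hp (t • u + (1 - t) • p)).trans (add_le_add_left hseg _)
  rw [ha] at h
  exact_mod_cast h

lemma mul_sub_le_inner
    (hconv : ∀ x y : H, ∀ t : ℝ, 0 ≤ t → t ≤ 1 →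
      g (t • x + (1 - t) • y) ≤ (t : ℝ) * g x + ((1 - t : ℝ) : EReal) * g y)
    (hγ : 0 < γ) (hp : IsProxMinimizer g γ x p) {u : H} {a b : ℝ} (ha : g p = a)
    (hb : g u = b) :
    γ * (a - b) ≤ ⟪x - p, p - u⟫ := by
  refine le_of_forall_le_add_mul (D := ‖u - p‖ ^ 2 / 2) fun t ht₀ ht₁ => ?_
  have hseg := hp.le_segment hconv ha hb ht₀.le ht₁
  have hnorm : ‖t • u + (1 - t) • p - x‖ ^ 2
      = ‖p - x‖ ^ 2 + 2 * t * ⟪p - x, u - p⟫ + t ^ 2 * ‖u - p‖ ^ 2 := by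
    rw [show t • u + (1 - t) • p - x = (p - x) + t • (u - p) by module, norm_add_sq_real,
      real_inner_smul_right, norm_smul, Real.norm_eq_abs, mul_pow, sq_abs]
    ring
  have hinner : ⟪x - p, p - u⟫ = ⟪p - x, u - p⟫ := by
    rw [← inner_neg_neg, neg_sub, neg_sub]
  rw [hnorm] at hseg
  rw [hinner]
  have hscaled : t * (γ * (a - b)) ≤ t * (⟪p - x, u - p⟫ + t * (‖u - p‖ ^ 2 / 2)) := by
    field_simp at hseg
    nlinarith
  exact le_of_mul_le_mul_left hscaled ht₀

end IsProxMinimizer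

end

theorem stmt_8_general {H : Type*} [NormedAddCommGroup H] [InnerProductSpace ℝ H]
    (g : H → EReal)
    (hconv : ∀ x y : H, ∀ t : ℝ, 0 ≤ t → t ≤ 1 →
      g (t • x + (1 - t) • y) ≤ (t : ℝ) * g x + ((1 - t : ℝ) : EReal) * g y)
    (hproper : (∃ x, g x ≠ ⊤) ∧ ∀ x, g x ≠ ⊥)
    (α β : ℝ) (hα : 0 < α) (hαβ : α ≤ β) (x p q : H)
    (hp : ∀ u : H, g p + ((1 / (2 * α) * ‖p - x‖ ^ 2 : ℝ) : EReal)
      ≤ g u + ((1 / (2 * α) * ‖u - x‖ ^ 2 : ℝ) : EReal))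
    (hq : ∀ u : H, g q + ((1 / (2 * β) * ‖q - x‖ ^ 2 : ℝ) : EReal)
      ≤ g u + ((1 / (2 * β) * ‖u - x‖ ^ 2 : ℝ) : EReal)) :
    ‖p - q‖ ≤ |α - β| * ‖β⁻¹ • (x - q)‖ := by
  have hβ : 0 < β := hα.trans_le hαβ
  have hp' : IsProxMinimizer g α x p := hp
  have hq' : IsProxMinimizer g β x q := hq
  obtain ⟨a, ha⟩ := hp'.exists_eq_coe hproper.1 (hproper.2 p)
  obtain ⟨b, hb⟩ := hq'.exists_eq_coe hproper.1 (hproper.2 q)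
  have hpq := hp'.mul_sub_le_inner hconv hα ha hb
  have hqp := hq'.mul_sub_le_inner hconv hβ hb ha
  have hmono : 0 ≤ ⟪x - p, p - q⟫ / α + ⟪x - q, q - p⟫ / β := by
    rw [← le_div_iff₀' hα] at hpq
    rw [← le_div_iff₀' hβ] at hqp
    linarith
  have hbound := mul_norm_sub_le_of_inner_nonneg hα hαβ hmono
  rw [norm_smul, Real.norm_eq_abs, abs_of_nonpos (by linarith : α - β ≤ 0),
    abs_inv, abs_of_pos hβ]
  field_simp
  linarith

theorem stmt_8 {H : Type*} [NormedAddCommGroup H] [InnerProductSpace ℝ H]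
    (g : H → EReal)
    (hconv : ∀ x y : H, ∀ t : ℝ, 0 ≤ t → t ≤ 1 →
      g (t • x + (1 - t) • y) ≤ (t : ℝ) * g x + ((1 - t : ℝ) : EReal) * g y)
    (hproper : (∃ x, g x ≠ ⊤) ∧ ∀ x, g x ≠ ⊥)
    (hlsc : LowerSemicontinuous g)
    (α β : ℝ) (hα : 0 < α) (hαβ : α ≤ β) (x p q : H)
    (hp : ∀ u : H, g p + ((1 / (2 * α) * ‖p - x‖ ^ 2 : ℝ) : EReal)
      ≤ g u + ((1 / (2 * α) * ‖u - x‖ ^ 2 : ℝ) : EReal))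
    (hq : ∀ u : H, g q + ((1 / (2 * β) * ‖q - x‖ ^ 2 : ℝ) : EReal)
      ≤ g u + ((1 / (2 * β) * ‖u - x‖ ^ 2 : ℝ) : EReal)) :
    ‖p - q‖ ≤ |α - β| * ‖β⁻¹ • (x - q)‖ :=
  stmt_8_general g hconv hproper α β hα hαβ x p q hp hq
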